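/- arXiv:1712.05212 — 3 statements merged into one kernel-verified Lean document; each statement's English description precedes it below -/
import Mathlib

section
/- The set C₀ = {x ∈ ω^ω : x(0) = 0} belongs to the tree ideal cl₀, but does not belong to l₀, does not belong to m₀, and does not belong to s₀; in particular cl₀ is not contained in l₀ ∪ m₀ ∪ s₀. -/
/-!
Removing the single root successor `0` from a complete Laver tree leaves a complete Laver tree,
and its body misses `C₀`; so `C₀ ∈ cl₀`. On the other hand `C₀` is the body of a Laver tree, which
is also a Miller and a Sacks tree, and every Sacks tree has a branch; so every subtree of it in
any of these families has a branch inside `C₀`, and `C₀` lies in none of `l₀`, `m₀`, `s₀`.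
-/

open Cardinal Set

/-- A tree on ω: a nonempty set of finite sequences closed under initial segments. -/
def IsTree (T : Set (List ℕ)) : Prop :=
  T.Nonempty ∧ ∀ s ∈ T, ∀ n : ℕ, s.take n ∈ T

/-- The body of a tree: all infinite branches. -/
def treeBody (T : Set (List ℕ)) : Set (ℕ → ℕ) :=
  {x | ∀ n : ℕ, (List.ofFn fun i : Fin n => x i) ∈ T}

/-- Immediate successors of a node in a tree. -/
def succs (T : Set (List ℕ)) (t : List ℕ) : Set ℕ := {n | t ++ [n] ∈ T}

/-- Sacks (perfect) tree: every node has an extension with at least two immediate successors. -/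
def IsSacksTree (T : Set (List ℕ)) : Prop :=
  IsTree T ∧ ∀ s ∈ T, ∃ t ∈ T, s <+: t ∧ (succs T t).Nontrivial

/-- Miller tree: every node has an extension with infinitely many immediate successors. -/
def IsMillerTree (T : Set (List ℕ)) : Prop :=
  IsTree T ∧ ∀ s ∈ T, ∃ t ∈ T, s <+: t ∧ (succs T t).Infinite

/-- Laver tree: has a stem (a node comparable with every node) such that every node
extending the stem has infinitely many immediate successors. -/
def IsLaverTree (T : Set (List ℕ)) : Prop :=
  IsTree T ∧ ∃ s ∈ T, (∀ t ∈ T, s <+: t ∨ t <+: s) ∧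
    ∀ t ∈ T, s <+: t → (succs T t).Infinite

/-- Complete Laver tree: every node has infinitely many immediate successors. -/
def IsCompleteLaverTree (T : Set (List ℕ)) : Prop :=
  IsTree T ∧ ∀ t ∈ T, (succs T t).Infinite

/-- The tree ideal t₀ associated with a family of trees 𝕋. -/
def treeIdeal (𝕋 : Set (Set (List ℕ))) : Set (Set (ℕ → ℕ)) :=
  {A | ∀ P ∈ 𝕋, ∃ Q ∈ 𝕋, Q ⊆ P ∧ treeBody Q ∩ A = ∅}

/-- t-measurability with respect to a family of trees 𝕋. -/
def TMeasurable (𝕋 : Set (Set (List ℕ))) (A : Set (ℕ → ℕ)) : Prop :=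
  ∀ P ∈ 𝕋, ∃ Q ∈ 𝕋, Q ⊆ P ∧ (treeBody Q ⊆ A ∨ treeBody Q ∩ A = ∅)

/-- 𝕋-Bernstein set: meets and omits the body of every tree in 𝕋. -/
def TBernstein (𝕋 : Set (Set (List ℕ))) (B : Set (ℕ → ℕ)) : Prop :=
  ∀ T ∈ 𝕋, (B ∩ treeBody T).Nonempty ∧ (B \ treeBody T).Nonempty

namespace IsTree

variable {T : Set (List ℕ)}

theorem nil_mem (hT : IsTree T) : [] ∈ T := by
  obtain ⟨⟨s, hs⟩, hclosed⟩ := hT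
  simpa using hclosed s hs 0

theorem mem_of_prefix (hT : IsTree T) {s t : List ℕ} (hst : s <+: t) (ht : t ∈ T) : s ∈ T := by
  rw [List.prefix_iff_eq_take.1 hst]
  exact hT.2 t ht _

theorem succs_nonempty_of_prefix (hT : IsTree T) {s t : List ℕ} (hst : s <+: t) (ht : t ∈ T)
    (hlt : s.length < t.length) : (succs T s).Nonempty := by
  obtain ⟨_ | ⟨a, r⟩, rfl⟩ := hst
  · simp at hlt
  · exact ⟨a, hT.mem_of_prefix (by simp) ht⟩

theorem succs_nonempty_of_prefix_succs (hT : IsTree T) {s t : List ℕ} (hst : s <+: t)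
    (hsucc : (succs T t).Nonempty) : (succs T s).Nonempty := by
  obtain ⟨k, hk⟩ := hsucc
  exact hT.succs_nonempty_of_prefix (hst.trans (List.prefix_append t [k])) hk
    (by simpa using Nat.lt_succ_of_le hst.length_le)

theorem treeBody_nonempty (hT : IsTree T) (hsucc : ∀ t ∈ T, (succs T t).Nonempty) :
    (treeBody T).Nonempty := by
  classical
  let next : List ℕ → ℕ := fun t => if h : (succs T t).Nonempty then h.some else 0
  have next_mem : ∀ t ∈ T, t ++ [next t] ∈ T := fun t ht => by
    rw [show next t = (hsucc t ht).some from dif_pos (hsucc t ht)]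
    exact (hsucc t ht).some_mem
  let node : ℕ → List ℕ := fun n => Nat.rec [] (fun _ t => t ++ [next t]) n
  refine ⟨fun n => next (node n), fun n => ?_⟩
  have hnode : ∀ n, (List.ofFn fun i : Fin n => next (node i)) = node n ∧ node n ∈ T := by
    intro n
    induction n with
    | zero => exact ⟨rfl, hT.nil_mem⟩
    | succ n ih =>
      rw [List.ofFn_succ_last]
      simp only [Fin.val_castSucc, Fin.val_last, ih.1]
      exact ⟨rfl, next_mem _ ih.2⟩
  exact (hnode n).1 ▸ (hnode n).2

end IsTree

variable {T : Set (List ℕ)}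

theorem IsLaverTree.isMillerTree (hT : IsLaverTree T) : IsMillerTree T := by
  obtain ⟨hTree, stem, hstem, hcomp, hinf⟩ := hT
  refine ⟨hTree, fun s hs => ?_⟩
  rcases hcomp s hs with hs' | hs'
  · exact ⟨s, hs, List.prefix_rfl, hinf s hs hs'⟩
  · exact ⟨stem, hstem, hs', hinf stem hstem List.prefix_rfl⟩

theorem IsMillerTree.isSacksTree (hT : IsMillerTree T) : IsSacksTree T := by
  refine ⟨hT.1, fun s hs => ?_⟩
  obtain ⟨t, ht, hst, hinf⟩ := hT.2 s hs
  exact ⟨t, ht, hst, hinf.nontrivial⟩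

theorem IsSacksTree.treeBody_nonempty (hT : IsSacksTree T) : (treeBody T).Nonempty := by
  refine hT.1.treeBody_nonempty fun s hs => ?_
  obtain ⟨t, -, hst, hsplit⟩ := hT.2 s hs
  exact hT.1.succs_nonempty_of_prefix_succs hst hsplit.nonempty

theorem treeBody_mono {P Q : Set (List ℕ)} (h : Q ⊆ P) : treeBody Q ⊆ treeBody P :=
  fun _ hx n => h (hx n)

theorem notMem_treeIdeal_of_treeBody_subset {𝕋 : Set (Set (List ℕ))} {A : Set (ℕ → ℕ)}
    (hne : ∀ Q ∈ 𝕋, (treeBody Q).Nonempty) {P : Set (List ℕ)} (hP : P ∈ 𝕋)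
    (hPA : treeBody P ⊆ A) : A ∉ treeIdeal 𝕋 := by
  intro hA
  obtain ⟨Q, hQ, hQP, hdisj⟩ := hA P hP
  obtain ⟨x, hx⟩ := hne Q hQ
  exact Set.eq_empty_iff_forall_notMem.1 hdisj x ⟨hx, hPA (treeBody_mono hQP hx)⟩

def rootCone (a : ℕ) : Set (List ℕ) := {t | t = [] ∨ ∃ r, t = a :: r}

theorem rootCone_isLaverTree (a : ℕ) : IsLaverTree (rootCone a) := by
  refine ⟨⟨⟨[], Or.inl rfl⟩, ?_⟩, [a], Or.inr ⟨[], rfl⟩, ?_, ?_⟩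
  · rintro s (rfl | ⟨r, rfl⟩) (_ | n)
    exacts [Or.inl rfl, Or.inl rfl, Or.inl rfl, Or.inr ⟨r.take n, rfl⟩]
  · rintro t (rfl | ⟨r, rfl⟩)
    · exact Or.inr List.nil_prefix
    · exact Or.inl (by simp)
  · rintro t (rfl | ⟨r, rfl⟩) hstem
    · simp at hstem
    · convert Set.infinite_univ (α := ℕ)
      exact Set.eq_univ_of_forall fun n => Or.inr ⟨r ++ [n], rfl⟩

theorem treeBody_rootCone_subset (a : ℕ) : treeBody (rootCone a) ⊆ {x | x 0 = a} := by
  intro x hx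
  simpa [rootCone] using hx 1

theorem setOf_apply_zero_eq_notMem_treeIdeal {𝕋 : Set (Set (List ℕ))}
    (h𝕋 : ∀ T ∈ 𝕋, IsSacksTree T) {a : ℕ} (hcone : rootCone a ∈ 𝕋) :
    {x : ℕ → ℕ | x 0 = a} ∉ treeIdeal 𝕋 :=
  notMem_treeIdeal_of_treeBody_subset (fun Q hQ => (h𝕋 Q hQ).treeBody_nonempty) hcone
    (treeBody_rootCone_subset a)

theorem IsCompleteLaverTree.sep_head?_ne (hT : IsCompleteLaverTree T) (a : ℕ) :
    IsCompleteLaverTree {t ∈ T | t.head? ≠ some a} := by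
  obtain ⟨hTree, hinf⟩ := hT
  refine ⟨⟨⟨[], hTree.nil_mem, by simp⟩, fun s hs n => ⟨hTree.2 s hs.1 n, ?_⟩⟩, ?_⟩
  · rw [List.head?_take]
    split_ifs <;> simp [hs.2]
  · rintro (_ | ⟨b, r⟩) ⟨ht, hb⟩
    · exact ((hinf [] ht).sdiff (Set.finite_singleton a)).mono fun n hn =>
        ⟨hn.1, by simpa using hn.2⟩
    · exact (hinf _ ht).mono fun n hn => ⟨hn, by simpa using hb⟩

theorem setOf_apply_zero_eq_mem_treeIdeal_completeLaver (a : ℕ) :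
    {x : ℕ → ℕ | x 0 = a} ∈ treeIdeal {T | IsCompleteLaverTree T} := by
  refine fun P hP => ⟨_, hP.sep_head?_ne a, fun t ht => ht.1, ?_⟩
  refine Set.eq_empty_iff_forall_notMem.2 fun x hx => (hx.1 1).2 ?_
  simpa using hx.2

/-- C₀ = {x | x 0 = 0} belongs to cl₀ but not to l₀, m₀ or s₀;
in particular cl₀ ⊄ l₀ ∪ m₀ ∪ s₀. -/
theorem stmt0 :
    ({x : ℕ → ℕ | x 0 = 0} ∈ treeIdeal {T | IsCompleteLaverTree T} ∧
      {x : ℕ → ℕ | x 0 = 0} ∉ treeIdeal {T | IsLaverTree T} ∧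
      {x : ℕ → ℕ | x 0 = 0} ∉ treeIdeal {T | IsMillerTree T} ∧
      {x : ℕ → ℕ | x 0 = 0} ∉ treeIdeal {T | IsSacksTree T}) ∧
    ¬ treeIdeal {T | IsCompleteLaverTree T} ⊆
        treeIdeal {T | IsLaverTree T} ∪ treeIdeal {T | IsMillerTree T} ∪
          treeIdeal {T | IsSacksTree T} := by
  have hcl := setOf_apply_zero_eq_mem_treeIdeal_completeLaver 0
  have hlaver := rootCone_isLaverTree 0
  have hl := setOf_apply_zero_eq_notMem_treeIdeal
    (fun T (hT : IsLaverTree T) => hT.isMillerTree.isSacksTree) hlaver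
  have hm := setOf_apply_zero_eq_notMem_treeIdeal
    (fun T (hT : IsMillerTree T) => hT.isSacksTree) hlaver.isMillerTree
  have hs := setOf_apply_zero_eq_notMem_treeIdeal
    (fun T (hT : IsSacksTree T) => hT) hlaver.isMillerTree.isSacksTree
  refine ⟨⟨hcl, hl, hm, hs⟩, fun hsub => ?_⟩
  rcases hsub hcl with (h | h) | h
  exacts [hl h, hm h, hs h]
end

section
/- There is no cl₀-Luzin set: for every set L ⊆ ω^ω there exists a set A ∈ cl₀ such that the cardinality of A ∩ L equals the cardinality of L. -/
/-!
A set of the form `{x | ∃ n, initSeg x (n + 1) = u n}` lies in cl₀: inside a complete Laver tree,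
delete every node having one of the `u n` as a prefix; each node loses at most one immediate
successor, so what remains is a complete Laver tree whose body misses the set.

It remains to choose `u` so that this set catches `|L|` points of `L`. For countable `L`, let
`u n` be the length-`(n+1)` segment of the `n`-th point of `L`. For uncountable `L`, if some cone
`[k]` carries `|L|` points of `L`, take `u n = [k]`. Otherwise every cone `[k]` is small; since a
cone with more than `ρ ≥ ℵ₀` points of `L` has a child cone with more than `ρ` points, we may
descend from the root to a node `u k` of length `k + 1` whose cone carries more than
`max ℵ₀ |L ∩ [k]|` points, and then the union of the cones `[u k]` meets `L` in at least
`|L|` points, `L` being the countable union of the sets `L ∩ [k]`.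
-/

open Cardinal Set

abbrev cl₀ : Set (Set (ℕ → ℕ)) := treeIdeal {T | IsCompleteLaverTree T}

def initSeg (x : ℕ → ℕ) (n : ℕ) : List ℕ := List.ofFn fun i : Fin n => x i

@[simp]
lemma initSeg_length (x : ℕ → ℕ) (n : ℕ) : (initSeg x n).length = n := List.length_ofFn

lemma initSeg_succ (x : ℕ → ℕ) (n : ℕ) : initSeg x (n + 1) = initSeg x n ++ [x n] := by
  rw [initSeg, List.ofFn_succ']
  simp [initSeg]

def cylinder (s : List ℕ) : Set (ℕ → ℕ) := {x | initSeg x s.length = s}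

lemma cylinder_nil : cylinder [] = Set.univ := by
  simp [cylinder, initSeg]

lemma mem_cylinder_append_singleton {s : List ℕ} {m : ℕ} {x : ℕ → ℕ} :
    x ∈ cylinder (s ++ [m]) ↔ x ∈ cylinder s ∧ x s.length = m := by
  simp only [cylinder, mem_ofPred_eq, List.length_append, List.length_singleton,
    initSeg_succ]
  constructor
  · intro h
    obtain ⟨hs, hm⟩ := List.append_inj' h rfl
    exact ⟨hs, List.singleton_inj.mp hm⟩
  · rintro ⟨hs, rfl⟩
    rw [hs]

lemma cylinder_eq_iUnion (s : List ℕ) : cylinder s = ⋃ m, cylinder (s ++ [m]) := by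
  ext x
  simp only [mem_iUnion, mem_cylinder_append_singleton]
  exact ⟨fun h => ⟨_, h, rfl⟩, fun ⟨_, h, _⟩ => h⟩

lemma iUnion_cylinder_singleton : ⋃ m, cylinder [m] = Set.univ :=
  (cylinder_eq_iUnion []).symm.trans cylinder_nil

universe u

lemma mk_iUnion_le_of_forall_mk_le {α ι : Type u} [Countable ι] {s : ι → Set α} {κ : Cardinal}
    (hκ : ℵ₀ ≤ κ) (hs : ∀ i, #(s i) ≤ κ) : #↑(⋃ i, s i) ≤ κ :=
  calc #↑(⋃ i, s i) ≤ #ι * ⨆ i, #(s i) := mk_iUnion_le s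
    _ ≤ ℵ₀ * κ := mul_le_mul' mk_le_aleph0 (ciSup_le' hs)
    _ = κ := aleph0_mul_eq hκ

lemma treeIdeal_subset {𝕋 : Set (Set (List ℕ))} {A B : Set (ℕ → ℕ)} (hA : A ∈ treeIdeal 𝕋)
    (hBA : B ⊆ A) : B ∈ treeIdeal 𝕋 := by
  intro P hP
  obtain ⟨Q, hQ, hQP, hQA⟩ := hA P hP
  exact ⟨Q, hQ, hQP, subset_empty_iff.mp (hQA ▸ inter_subset_inter_right _ hBA)⟩

theorem setOf_exists_initSeg_mem_mem_cl₀ (F : Set (List ℕ)) (hF : ∀ t, (succs F t).Finite) :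
    {x | ∃ n, initSeg x (n + 1) ∈ F} ∈ cl₀ := by
  rintro P ⟨⟨⟨p, hp⟩, hP_take⟩, hP_succs⟩
  set Q : Set (List ℕ) := {t | t ∈ P ∧ ∀ s ∈ F, s ≠ [] → ¬ s <+: t}
  have hQ_take : ∀ t ∈ Q, ∀ n, t.take n ∈ Q := fun t ht n =>
    ⟨hP_take t ht.1 n, fun s hs hne hst => ht.2 s hs hne (hst.trans (List.take_prefix n t))⟩
  have hQ_succs : ∀ t ∈ Q, succs P t \ succs F t ⊆ succs Q t := by
    rintro t ht m ⟨hmP, hmF⟩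
    refine ⟨hmP, fun s hs hne hst => ?_⟩
    rcases List.prefix_concat_iff.mp hst with rfl | hst
    · exact hmF hs
    · exact ht.2 s hs hne hst
  refine ⟨Q, ⟨⟨⟨[], ?_⟩, hQ_take⟩, fun t ht => ?_⟩, fun t ht => ht.1, ?_⟩
  · exact ⟨by simpa using hP_take p hp 0, fun s _ hne hs => hne (List.prefix_nil.mp hs)⟩
  · exact ((hP_succs t ht.1).sdiff (hF t)).mono (hQ_succs t ht)
  · refine eq_empty_of_forall_notMem fun x ⟨hxQ, n, hxF⟩ => ?_
    exact (hxQ (n + 1)).2 _ hxF (List.ne_nil_of_length_pos (by simp)) (List.prefix_refl _)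

def Predicts (u : ℕ → List ℕ) (x : ℕ → ℕ) : Prop := ∃ n, initSeg x (n + 1) = u n

theorem setOf_predicts_mem_cl₀ (u : ℕ → List ℕ) : {x | Predicts u x} ∈ cl₀ := by
  refine treeIdeal_subset (setOf_exists_initSeg_mem_mem_cl₀ {t | u (t.length - 1) = t} ?_) ?_
  · refine fun t => Subsingleton.finite fun a ha b hb => ?_
    simp only [succs, mem_ofPred_eq, List.length_append, List.length_singleton,
      Nat.add_sub_cancel] at ha hb
    simpa using ha.symm.trans hb
  · rintro x ⟨n, hn⟩
    refine ⟨n, ?_⟩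
    rw [mem_ofPred_eq, initSeg_length, Nat.add_sub_cancel, hn]

lemma cylinder_subset_predicts {u : ℕ → List ℕ} {n : ℕ} (h : (u n).length = n + 1) :
    cylinder (u n) ⊆ {x | Predicts u x} :=
  fun x (hx : initSeg x (u n).length = u n) => ⟨n, h ▸ hx⟩

lemma exists_length_eq_lt_mk_inter_cylinder {L : Set (ℕ → ℕ)} {ρ : Cardinal} (hρ : ℵ₀ ≤ ρ)
    (hL : ρ < #L) : ∀ n, ∃ t : List ℕ, t.length = n ∧ ρ < #↑(L ∩ cylinder t)
  | 0 => ⟨[], rfl, by rwa [cylinder_nil, inter_univ]⟩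
  | n + 1 => by
    obtain ⟨t, rfl, ht⟩ := exists_length_eq_lt_mk_inter_cylinder hρ hL n
    have : ∃ m, ρ < #↑(L ∩ cylinder (t ++ [m])) := by
      by_contra! h
      rw [cylinder_eq_iUnion, inter_iUnion] at ht
      exact ht.not_ge (mk_iUnion_le_of_forall_mk_le hρ h)
    obtain ⟨m, hm⟩ := this
    exact ⟨t ++ [m], by simp, hm⟩

lemma exists_subset_predicts_of_countable {L : Set (ℕ → ℕ)} (hL : L.Countable) :
    ∃ u, L ⊆ {x | Predicts u x} := by
  obtain ⟨f, hf⟩ := countable_iff_exists_subset_range.mp hL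
  refine ⟨fun n => initSeg (f n) (n + 1), fun _ hx => ?_⟩
  obtain ⟨n, rfl⟩ := hf hx
  exact ⟨n, rfl⟩

lemma exists_mk_le_mk_predicts_inter_of_forall_lt {L : Set (ℕ → ℕ)} (hL : ℵ₀ < #L)
    (hk : ∀ k, #↑(L ∩ cylinder [k]) < #L) : ∃ u, #L ≤ #↑({x | Predicts u x} ∩ L) := by
  have hu : ∀ k, ∃ t : List ℕ, t.length = k + 1 ∧
      ℵ₀ ⊔ #↑(L ∩ cylinder [k]) < #↑(L ∩ cylinder t) :=
    fun k => exists_length_eq_lt_mk_inter_cylinder le_sup_left (max_lt hL (hk k)) (k + 1)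
  choose u hu_length hu_mk using hu
  have hu_le : ∀ k, ℵ₀ ⊔ #↑(L ∩ cylinder [k]) ≤ #↑({x | Predicts u x} ∩ L) := fun k =>
    (hu_mk k).le.trans <| mk_le_mk_of_subset fun x ⟨hxL, hx⟩ =>
      ⟨cylinder_subset_predicts (hu_length k) hx, hxL⟩
  refine ⟨u, ?_⟩
  calc #L = #↑(⋃ k, L ∩ cylinder [k]) := by
        rw [← inter_iUnion, iUnion_cylinder_singleton, inter_univ]
    _ ≤ _ := mk_iUnion_le_of_forall_mk_le (le_sup_left.trans (hu_le 0))
        fun k => le_sup_right.trans (hu_le k)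

theorem exists_mk_le_mk_predicts_inter (L : Set (ℕ → ℕ)) :
    ∃ u, #L ≤ #↑({x | Predicts u x} ∩ L) := by
  rcases le_or_gt #L ℵ₀ with hL | hL
  · obtain ⟨u, hu⟩ := exists_subset_predicts_of_countable (le_aleph0_iff_set_countable.mp hL)
    exact ⟨u, by rw [inter_eq_right.mpr hu]⟩
  by_cases hk : ∃ k, #L ≤ #↑(L ∩ cylinder [k])
  · obtain ⟨k, hk⟩ := hk
    exact ⟨fun _ => [k], hk.trans (mk_le_mk_of_subset fun x ⟨hxL, hx⟩ => ⟨⟨0, hx⟩, hxL⟩)⟩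
  · push Not at hk
    exact exists_mk_le_mk_predicts_inter_of_forall_lt hL hk

/-- there is no cl₀-Luzin set. -/
theorem stmt11 :
    ∀ L : Set (ℕ → ℕ), ∃ A ∈ treeIdeal {T | IsCompleteLaverTree T},
      Cardinal.mk ↑(A ∩ L) = Cardinal.mk ↑L := by
  intro L
  obtain ⟨u, hu⟩ := exists_mk_le_mk_predicts_inter L
  exact ⟨_, setOf_predicts_mem_cl₀ u, (mk_le_mk_of_subset inter_subset_right).antisymm hu⟩
end

section
/- If L ⊆ ℝ is a generalized Luzin set, S ⊆ ℝ is a generalized Sierpiński set, and κ = max(|L|, |S|) is a regular cardinal, then |L| = |S| = κ. -/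
open Cardinal Set

/-- Generalized Luzin set: meets every meager set in size < |L|. -/
def IsGenLuzin (L : Set ℝ) : Prop :=
  ∀ M : Set ℝ, IsMeagre M → Cardinal.mk ↑(L ∩ M) < Cardinal.mk ↑L

/-- Generalized Sierpiński set: meets every Lebesgue null set in size < |S|. -/
def IsGenSierpinski (S : Set ℝ) : Prop :=
  ∀ N : Set ℝ, MeasureTheory.volume N = 0 → Cardinal.mk ↑(S ∩ N) < Cardinal.mk ↑S


section Rothberger

open MeasureTheory

/-- The set of Liouville numbers: a null, comeager set. -/
private def lioN : Set ℝ := {x | Liouville x}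

private lemma lioN_null : volume lioN = 0 := volume_setOf_liouville

private lemma lioM_meagre : IsMeagre (lioNᶜ) := by
  unfold IsMeagre
  rw [compl_compl]
  exact eventually_residual_liouville

private lemma null_sub_right (x : ℝ) : volume ((fun y : ℝ => y - x) ⁻¹' lioN) = 0 := by
  have : (fun y : ℝ => y - x) = (fun y : ℝ => y + (-x)) := by funext y; ring
  rw [this, measure_preimage_add_right]
  exact lioN_null

private lemma null_sub_left (x : ℝ) : volume ((fun y : ℝ => x - y) ⁻¹' lioN) = 0 := by
  have : (fun y : ℝ => x - y) = (fun y : ℝ => x + y) ∘ (fun y : ℝ => -y) := by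
    funext y; simp [sub_eq_add_neg]
  rw [this, Set.preimage_comp, Measure.measure_preimage_neg, measure_preimage_add]
  exact lioN_null

private lemma meagre_sub_right (x : ℝ) : IsMeagre ((fun y : ℝ => y - x) ⁻¹' lioNᶜ) :=
  lioM_meagre.preimage_of_isOpenMap (continuous_id.sub continuous_const)
    (Homeomorph.subRight x).isOpenMap

private lemma meagre_sub_left (x : ℝ) : IsMeagre ((fun y : ℝ => x - y) ⁻¹' lioNᶜ) :=
  lioM_meagre.preimage_of_isOpenMap (continuous_const.sub continuous_id)
    (Homeomorph.subLeft x).isOpenMap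

/-- If L is generalized Luzin, S is generalized Sierpinski, and |S| is regular,
then |S| <= |L|. -/
private lemma sier_le_luzin (L S : Set ℝ) (hL : IsGenLuzin L) (hS : IsGenSierpinski S)
    (hreg : (Cardinal.mk ↑S).IsRegular) : Cardinal.mk ↑S ≤ Cardinal.mk ↑L := by
  by_contra hlt
  push_neg at hlt
  -- translates of the Liouville numbers by elements of L cover ℝ
  have hcover : ∀ z : ℝ, ∃ x : L, Liouville (z - (x : ℝ)) := by
    intro z
    by_contra hz
    push_neg at hz
    have hsub : L ⊆ (fun y : ℝ => z - y) ⁻¹' lioNᶜ := by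
      intro x hx
      exact hz ⟨x, hx⟩
    have := hL _ (meagre_sub_left z)
    rw [Set.inter_eq_self_of_subset_left hsub] at this
    exact absurd this (lt_irrefl _)
  -- hence S is covered by |L| many null sets
  have hScover : S ⊆ ⋃ x : L, (fun y : ℝ => y - (x : ℝ)) ⁻¹' lioN := by
    intro z hz
    obtain ⟨x, hx⟩ := hcover z
    exact Set.mem_iUnion.2 ⟨x, hx⟩
  have h1 : Cardinal.mk ↑S ≤ Cardinal.mk ↑(⋃ x : L, S ∩ ((fun y : ℝ => y - (x : ℝ)) ⁻¹' lioN)) := by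
    apply Cardinal.mk_le_mk_of_subset
    intro z hz
    obtain ⟨x, hx⟩ := hcover z
    exact Set.mem_iUnion.2 ⟨x, hz, hx⟩
  have h2 : Cardinal.mk ↑(⋃ x : L, S ∩ ((fun y : ℝ => y - (x : ℝ)) ⁻¹' lioN)) <
      Cardinal.mk ↑S := by
    refine lt_of_le_of_lt Cardinal.mk_iUnion_le_sum_mk ?_
    exact Cardinal.sum_lt_of_isRegular hreg hlt
      (fun x => hS _ (null_sub_right (x : ℝ)))
  exact absurd (h1.trans_lt h2) (lt_irrefl _)

/-- If L is generalized Luzin, S is generalized Sierpinski, and |L| is regular,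
then |L| <= |S|. -/
private lemma luzin_le_sier (L S : Set ℝ) (hL : IsGenLuzin L) (hS : IsGenSierpinski S)
    (hreg : (Cardinal.mk ↑L).IsRegular) : Cardinal.mk ↑L ≤ Cardinal.mk ↑S := by
  by_contra hlt
  push_neg at hlt
  -- translates of the complement of Liouville numbers by elements of S cover ℝ
  have hcover : ∀ z : ℝ, ∃ x : S, ¬ Liouville (z - (x : ℝ)) := by
    intro z
    by_contra hz
    push_neg at hz
    have hsub : S ⊆ (fun y : ℝ => z - y) ⁻¹' lioN := by
      intro x hx
      exact hz ⟨x, hx⟩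
    have := hS _ (null_sub_left z)
    rw [Set.inter_eq_self_of_subset_left hsub] at this
    exact absurd this (lt_irrefl _)
  have h1 : Cardinal.mk ↑L ≤ Cardinal.mk ↑(⋃ x : S, L ∩ ((fun y : ℝ => y - (x : ℝ)) ⁻¹' lioNᶜ)) := by
    apply Cardinal.mk_le_mk_of_subset
    intro z hz
    obtain ⟨x, hx⟩ := hcover z
    exact Set.mem_iUnion.2 ⟨x, hz, hx⟩
  have h2 : Cardinal.mk ↑(⋃ x : S, L ∩ ((fun y : ℝ => y - (x : ℝ)) ⁻¹' lioNᶜ)) <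
      Cardinal.mk ↑L := by
    refine lt_of_le_of_lt Cardinal.mk_iUnion_le_sum_mk ?_
    exact Cardinal.sum_lt_of_isRegular hreg hlt
      (fun x => hL _ (meagre_sub_right (x : ℝ)))
  exact absurd (h1.trans_lt h2) (lt_irrefl _)

end Rothberger

/-- essentially Rothberger: if κ = max(|L|,|S|) is regular then |L| = |S| = κ. -/
theorem stmt15 (L S : Set ℝ) (hL : IsGenLuzin L) (hS : IsGenSierpinski S)
    (hreg : (max (Cardinal.mk ↑L) (Cardinal.mk ↑S)).IsRegular) :
    Cardinal.mk ↑L = max (Cardinal.mk ↑L) (Cardinal.mk ↑S) ∧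
    Cardinal.mk ↑S = max (Cardinal.mk ↑L) (Cardinal.mk ↑S) := by
  rcases le_total (Cardinal.mk ↑L) (Cardinal.mk ↑S) with h | h
  · have hmax : max (Cardinal.mk ↑L) (Cardinal.mk ↑S) = Cardinal.mk ↑S := max_eq_right h
    rw [hmax] at hreg ⊢
    have := sier_le_luzin L S hL hS hreg
    exact ⟨le_antisymm h this, rfl⟩
  · have hmax : max (Cardinal.mk ↑L) (Cardinal.mk ↑S) = Cardinal.mk ↑L := max_eq_left h
    rw [hmax] at hreg ⊢
    have := luzin_le_sier L S hL hS hreg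
    exact ⟨rfl, le_antisymm h this⟩
end
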